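/- Let H be a complex Hilbert space, S and T bounded self-adjoint operators on H, and a a bounded operator on H. Set B = S∘a − a∘T, and for λ ≥ 0 write R_λ(S) = (1 + λ² + S²)⁻¹ and R_λ(T) = (1 + λ² + T²)⁻¹. Then the map λ ↦ R_λ(S) ∘ ((1 + λ²)·B − S∘B∘T) ∘ R_λ(T) is Bochner integrable on [0, ∞), and f(S)∘a − a∘f(T) = (2/π) · ∫₀^∞ R_λ(S) ∘ ((1 + λ²)·B − S∘B∘T) ∘ R_λ(T) dλ, where f(S), f(T) denote the continuous functional calculus of f(x) = x/√(1 + x²) applied to S and T respectively. -/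

import Mathlib

/-!
For real `x`, `∫₀^∞ x / (1 + λ² + x²) dλ = (π / 2) · x / √(1 + x²)` (substitute `λ = √(1 + x²) t`
and integrate `1 / (1 + t²)`). The continuous functional calculus commutes with Bochner integrals,
so `f(S) = (2 / π) ∫₀^∞ S R_λ(S) dλ`, and likewise for `T`. The integrand equals
`S R_λ(S) a − a T R_λ(T)`, because with `B = S a − a T`,
`(1 + λ²) B − S B T = S a (1 + λ² + T²) − (1 + λ² + S²) a T`
and the outer resolvents cancel the quadratic factors.
-/

open MeasureTheory

/-- The resolvent `(1 + l² + T²)⁻¹` of a bounded operator `T` on a complex Hilbert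
space (via `Ring.inverse`, which gives the honest inverse when it exists). -/
noncomputable def resolvent4 {H : Type*} [NormedAddCommGroup H] [InnerProductSpace ℂ H]
    [CompleteSpace H] (T : H →L[ℂ] H) (l : ℝ) : H →L[ℂ] H :=
  Ring.inverse (((1 + l ^ 2 : ℝ) : ℂ) • (1 : H →L[ℂ] H) + T ^ 2)

open Real Set

theorem integral_Ici_inv_sq_add_sq {c : ℝ} (hc : 0 < c) :
    ∫ l in Ici (0 : ℝ), (c ^ 2 + l ^ 2)⁻¹ = π / (2 * c) := by
  have hscale : ∀ l : ℝ, (c ^ 2 + l ^ 2)⁻¹ = (c ^ 2)⁻¹ * (1 + (c⁻¹ * l) ^ 2)⁻¹ := fun l => by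
    field_simp
  simp_rw [integral_Ici_eq_integral_Ioi, hscale, integral_const_mul,
    integral_comp_mul_left_Ioi (fun x => (1 + x ^ 2)⁻¹) 0 (inv_pos.2 hc), mul_zero,
    integral_Ioi_inv_one_add_sq, arctan_zero, sub_zero, inv_inv, smul_eq_mul]
  field_simp

noncomputable def resolventKernel (l x : ℝ) : ℝ := x * (1 + l ^ 2 + x ^ 2)⁻¹

theorem integral_resolventKernel (x : ℝ) :
    ∫ l in Ici (0 : ℝ), resolventKernel l x = π / 2 * (x / √(1 + x ^ 2)) := by
  have hc : 0 < √(1 + x ^ 2) := sqrt_pos.2 (by positivity)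
  have hsq : ∀ l : ℝ, 1 + l ^ 2 + x ^ 2 = √(1 + x ^ 2) ^ 2 + l ^ 2 := fun l => by
    rw [sq_sqrt (by positivity)]; ring
  simp_rw [resolventKernel, hsq, integral_const_mul, integral_Ici_inv_sq_add_sq hc]
  field_simp

theorem continuous_resolventKernel : Continuous fun p : ℝ × ℝ => resolventKernel p.1 p.2 :=
  continuous_snd.mul <| Continuous.inv₀ (by fun_prop) fun _ => by positivity

theorem abs_resolventKernel_le (l x : ℝ) : |resolventKernel l x| ≤ |x| * (1 + l ^ 2)⁻¹ := by
  rw [resolventKernel, abs_mul, abs_inv, abs_of_pos (show 0 < 1 + l ^ 2 + x ^ 2 by positivity)]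
  exact mul_le_mul_of_nonneg_left (inv_anti₀ (by positivity) (by linarith [sq_nonneg x]))
    (abs_nonneg x)

theorem resolvent_sandwich {R A : Type*} [CommRing R] [Ring A] [Algebra R A] (c : R)
    (s t a rs rt : A) (hs : rs * (c • 1 + s ^ 2) = 1) (ht : (c • 1 + t ^ 2) * rt = 1) :
    rs * (c • (s * a - a * t) - s * (s * a - a * t) * t) * rt = rs * s * a - a * (t * rt) := by
  have hmid : c • (s * a - a * t) - s * (s * a - a * t) * t =
      s * a * (c • 1 + t ^ 2) - (c • 1 + s ^ 2) * a * t := by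
    simp only [smul_sub, mul_sub, sub_mul, mul_add, add_mul, mul_smul_comm, smul_mul_assoc,
      mul_one, one_mul, pow_two, mul_assoc]
    abel
  calc rs * (c • (s * a - a * t) - s * (s * a - a * t) * t) * rt
      = rs * s * a * ((c • 1 + t ^ 2) * rt) - rs * (c • 1 + s ^ 2) * (a * (t * rt)) := by
        rw [hmid]; noncomm_ring
    _ = rs * s * a - a * (t * rt) := by rw [ht, hs, mul_one, one_mul]

section CStarAlgebra

variable {A : Type*} [CStarAlgebra A] {a : A}

theorem cfc_const_add_sq (ha : IsSelfAdjoint a) (r : ℝ) :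
    cfc (fun x : ℝ => r + x ^ 2) a = (r : ℂ) • (1 : A) + a ^ 2 := by
  rw [cfc_const_add _ _ a, cfc_pow_id a 2, Algebra.algebraMap_eq_smul_one, Complex.coe_smul]

theorem isUnit_smul_one_add_sq (ha : IsSelfAdjoint a) {r : ℝ} (hr : 0 < r) :
    IsUnit ((r : ℂ) • (1 : A) + a ^ 2) :=
  cfc_const_add_sq ha r ▸ (isUnit_cfc_iff _ a).2 fun x _ => by positivity

theorem ringInverse_smul_one_add_sq (ha : IsSelfAdjoint a) {r : ℝ} (hr : 0 < r) :
    Ring.inverse ((r : ℂ) • (1 : A) + a ^ 2) = cfc (fun x : ℝ => (r + x ^ 2)⁻¹) a := by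
  rw [cfc_inv (fun x : ℝ => r + x ^ 2) a fun x _ => by positivity, cfc_const_add_sq ha]

theorem continuous_inv_one_add_sq_add_sq (l : ℝ) :
    Continuous fun x : ℝ => (1 + l ^ 2 + x ^ 2)⁻¹ :=
  Continuous.inv₀ (by fun_prop) fun _ => by positivity

theorem mul_cfc_eq_cfc_resolventKernel (ha : IsSelfAdjoint a) (l : ℝ) :
    a * cfc (fun x : ℝ => (1 + l ^ 2 + x ^ 2)⁻¹) a = cfc (resolventKernel l) a := by
  conv_lhs => enter [1]; rw [← cfc_id' ℝ a]
  rw [← cfc_mul (fun x : ℝ => x) _ a continuousOn_id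
    (continuous_inv_one_add_sq_add_sq l).continuousOn]
  rfl

theorem cfc_mul_eq_cfc_resolventKernel (ha : IsSelfAdjoint a) (l : ℝ) :
    cfc (fun x : ℝ => (1 + l ^ 2 + x ^ 2)⁻¹) a * a = cfc (resolventKernel l) a := by
  conv_lhs => enter [2]; rw [← cfc_id' ℝ a]
  rw [← cfc_mul _ (fun x : ℝ => x) a (continuous_inv_one_add_sq_add_sq l).continuousOn
    continuousOn_id]
  exact cfc_congr fun x _ => mul_comm _ _

theorem norm_resolventKernel_le_of_mem_spectrum (l : ℝ) {x : ℝ} (hx : x ∈ spectrum ℝ a) :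
    ‖resolventKernel l x‖ ≤ ‖a‖ * ‖(1 : A)‖ * (1 + l ^ 2)⁻¹ :=
  (abs_resolventKernel_le l x).trans <| by gcongr; exact spectrum.norm_le_norm_mul_of_mem hx

theorem hasFiniteIntegral_const_mul_inv_one_add_sq (c : ℝ) :
    HasFiniteIntegral (fun l : ℝ => c * (1 + l ^ 2)⁻¹) (volume.restrict (Ici 0)) :=
  (integrable_inv_one_add_sq.const_mul c).integrableOn.hasFiniteIntegral

theorem integrableOn_cfc_resolventKernel (ha : IsSelfAdjoint a) :
    IntegrableOn (fun l => cfc (resolventKernel l) a) (Ici 0) :=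
  integrableOn_cfc measurableSet_Ici _ _ a continuous_resolventKernel.continuousOn
    (.of_forall fun l _ => norm_resolventKernel_le_of_mem_spectrum l)
    (hasFiniteIntegral_const_mul_inv_one_add_sq _)

theorem setIntegral_cfc_resolventKernel (ha : IsSelfAdjoint a) :
    ∫ l in Ici (0 : ℝ), cfc (resolventKernel l) a =
      (π / 2) • cfc (fun x : ℝ => x / √(1 + x ^ 2)) a := by
  rw [← cfc_setIntegral measurableSet_Ici _ _ a continuous_resolventKernel.continuousOn
    (.of_forall fun l _ => norm_resolventKernel_le_of_mem_spectrum l)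
    (hasFiniteIntegral_const_mul_inv_one_add_sq _)]
  simp_rw [integral_resolventKernel]
  exact cfc_const_mul _ _ a <| Continuous.continuousOn <|
    continuous_id.div (by fun_prop) fun x => (sqrt_pos.2 (by positivity)).ne'

end CStarAlgebra

theorem resolvent4_sandwich {H : Type*} [NormedAddCommGroup H] [InnerProductSpace ℂ H]
    [CompleteSpace H] {S T : H →L[ℂ] H} (hS : IsSelfAdjoint S) (hT : IsSelfAdjoint T)
    (a : H →L[ℂ] H) (l : ℝ) :
    resolvent4 S l *
        (((1 + l ^ 2 : ℝ) : ℂ) • (S * a - a * T) - S * (S * a - a * T) * T) *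
        resolvent4 T l =
      cfc (resolventKernel l) S * a - a * cfc (resolventKernel l) T := by
  have hr : 0 < 1 + l ^ 2 := by positivity
  rw [resolvent4, resolvent4, resolvent_sandwich _ S T a _ _
      (Ring.inverse_mul_cancel _ (isUnit_smul_one_add_sq hS hr))
      (Ring.mul_inverse_cancel _ (isUnit_smul_one_add_sq hT hr)),
    ringInverse_smul_one_add_sq hS hr, ringInverse_smul_one_add_sq hT hr,
    cfc_mul_eq_cfc_resolventKernel hS, mul_cfc_eq_cfc_resolventKernel hT]

/-- The two-operator commutator integral formula: for bounded self-adjoint `S`, `T`,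
a bounded operator `a`, and `B = S a − a T`, the map
`l ↦ R_l(S) ((1 + l²) B − S B T) R_l(T)` is Bochner integrable on `[0, ∞)` and
`f(S) a − a f(T) = (2/π) ∫₀^∞ R_l(S) ((1 + l²) B − S B T) R_l(T) dl`, where
`f(x) = x / √(1 + x²)` is applied via the continuous functional calculus. -/
theorem stmt4 {H : Type*} [NormedAddCommGroup H] [InnerProductSpace ℂ H] [CompleteSpace H]
    (S T : H →L[ℂ] H) (hS : IsSelfAdjoint S) (hT : IsSelfAdjoint T) (a : H →L[ℂ] H) :
    IntegrableOn
      (fun l : ℝ =>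
        resolvent4 S l *
          (((1 + l ^ 2 : ℝ) : ℂ) • (S * a - a * T) - S * (S * a - a * T) * T) *
          resolvent4 T l)
      (Set.Ici 0) volume ∧
    cfc (fun x : ℝ => x / Real.sqrt (1 + x ^ 2)) S * a -
        a * cfc (fun x : ℝ => x / Real.sqrt (1 + x ^ 2)) T =
      ((2 / Real.pi : ℝ) : ℂ) •
        ∫ l in Set.Ici (0 : ℝ),
          resolvent4 S l *
            (((1 + l ^ 2 : ℝ) : ℂ) • (S * a - a * T) - S * (S * a - a * T) * T) *
            resolvent4 T l := by
  simp only [resolvent4_sandwich hS hT a]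
  have hSi := integrableOn_cfc_resolventKernel hS
  have hTi := integrableOn_cfc_resolventKernel hT
  refine ⟨(hSi.mul_const a).sub (hTi.const_mul a), ?_⟩
  rw [integral_sub (hSi.mul_const a) (hTi.const_mul a), integral_mul_const_of_integrable hSi,
    integral_const_mul_of_integrable hTi, setIntegral_cfc_resolventKernel hS,
    setIntegral_cfc_resolventKernel hT, smul_mul_assoc, mul_smul_comm, ← smul_sub,
    Complex.coe_smul, smul_smul, div_mul_div_cancel₀ pi_ne_zero, div_self two_ne_zero, one_smul]
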